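/- Suppose the canonical formula C = ⋀Γ ∧ ¬⋁Δ is a solution, and let G, H be quantifier-free formulas with free variables among ᾱ such that C ⊨_E G, G ⊨_E H, and G is not a solution. Then H is not a solution. (This justifies pruning the upward search through the solution semilattice: once a non-solution is reached above C, nothing above it is a solution.) -/
import Mathlib


open FirstOrder FirstOrder.Language

/-- `A` is a *solution* (w.r.t. the fixed data `Γ`, `Δ`, `w̄₁,…,w̄_k`): the sequent
`(A → ⋀_{i=1}^k A[ᾱ\w̄ᵢ]), Γ ⟹ Δ` is E-valid, i.e. it holds in every (nonempty)
structure for the language under every assignment of the free variables `ᾱ`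
(equality being interpreted as identity). -/
def IsSolution {L : Language} {n k : ℕ} (Γ Δ : Finset (L.Formula (Fin n)))
    (w : Fin k → Fin n → L.Term Empty) (A : L.Formula (Fin n)) : Prop :=
  ∀ (M : Type) [L.Structure M] [Nonempty M] (v : Fin n → M),
    (Formula.Realize A v →
      ∀ i : Fin k, Formula.Realize (M := M) (A.subst (w i)) (fun x : Empty => x.elim)) →
    (∀ G ∈ Γ, Formula.Realize G v) → ∃ G ∈ Δ, Formula.Realize G v

/-- `F ⊨_E G`: the implication `F → G` is E-valid. -/
def EEntails {L : Language} {α : Type} (F G : L.Formula α) : Prop :=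
  ∀ (M : Type) [L.Structure M] [Nonempty M] (v : α → M),
    Formula.Realize F v → Formula.Realize G v

/-- The canonical formula `C = ⋀Γ ∧ ¬⋁Δ`. -/
noncomputable def canonicalFormula {L : Language} {n : ℕ} (Γ Δ : Finset (L.Formula (Fin n))) :
    L.Formula (Fin n) :=
  (Γ.toList.foldr (· ⊓ ·) ⊤) ⊓ ∼(Δ.toList.foldr (· ⊔ ·) ⊥)


lemma realize_foldr_inf {L : Language} {n : ℕ} (M : Type) [L.Structure M] [Nonempty M]
    (l : List (L.Formula (Fin n))) (v : Fin n → M) :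
    Formula.Realize (l.foldr (· ⊓ ·) ⊤) v ↔ ∀ G ∈ l, Formula.Realize G v := by
  induction l with
  | nil => simp [Formula.Realize]
  | cons a l ih => simp [Formula.realize_inf, ih]

lemma realize_foldr_sup {L : Language} {n : ℕ} (M : Type) [L.Structure M] [Nonempty M]
    (l : List (L.Formula (Fin n))) (v : Fin n → M) :
    Formula.Realize (l.foldr (· ⊔ ·) ⊥) v ↔ ∃ G ∈ l, Formula.Realize G v := by
  induction l with
  | nil => simp [Formula.Realize]
  | cons a l ih => simp [Formula.realize_sup, ih]

/-- Suppose the canonical formula `C = ⋀Γ ∧ ¬⋁Δ` is a solution and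
`G`, `H` are quantifier-free formulas with free variables among `ᾱ` such that
`C ⊨_E G`, `G ⊨_E H` and `G` is not a solution. Then `H` is not a solution. -/
theorem not_isSolution_above {L : Language} {n k : ℕ} (hk : 1 ≤ k)
    (Γ Δ : Finset (L.Formula (Fin n)))
    (hΓ : ∀ G ∈ Γ, BoundedFormula.IsQF G) (hΔ : ∀ G ∈ Δ, BoundedFormula.IsQF G)
    (w : Fin k → Fin n → L.Term Empty)
    (G H : L.Formula (Fin n))
    (hG : BoundedFormula.IsQF G) (hH : BoundedFormula.IsQF H)
    (hC : IsSolution Γ Δ w (canonicalFormula Γ Δ))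
    (hCG : EEntails (canonicalFormula Γ Δ) G) (hGH : EEntails G H)
    (hGnot : ¬ IsSolution Γ Δ w G) :
    ¬ IsSolution Γ Δ w H := by
  intro hHsol
  apply hGnot
  intro M _ _ v hGimp hΓv
  by_contra hno
  push_neg at hno
  have hCv : Formula.Realize (canonicalFormula Γ Δ) v := by
    rw [canonicalFormula, Formula.realize_inf, Formula.realize_not,
      realize_foldr_inf, realize_foldr_sup]
    constructor
    · intro g hg; exact hΓv g (Finset.mem_toList.mp hg)
    · rintro ⟨g, hg, hgv⟩; exact hno g (Finset.mem_toList.mp hg) hgv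
  have hGv : Formula.Realize G v := hCG M v hCv
  have hGw := hGimp hGv
  obtain ⟨g, hg, hgv⟩ := hHsol M v (fun _ i => by
    have := hGw i
    simp only [Formula.Realize, BoundedFormula.realize_subst] at this ⊢
    exact hGH M _ this) hΓv
  exact hno g hg hgv
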